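/- Let M be an open monoid in a category of spaces and (X, a: M × X → X) an M-object. Then the composite ∃_{π_2} ∘ S^a: S^X → S^X is an inflationary idempotent: Id ⊑ ∃_{π_2} S^a and ∃_{π_2} S^a ∃_{π_2} S^a = ∃_{π_2} S^a. -/

import Mathlib

open CategoryTheory CategoryTheory.Limits

universe u v

variable {C : Type v} [Category.{v} C] [HasFiniteProducts C]

/-- The presheaf `S^X : Y ↦ C(Y × X, S)`. -/
noncomputable def pow (S X : C) : Cᵒᵖ ⥤ Type v where
  obj Z := (Opposite.unop Z ⨯ X) ⟶ S
  map f := TypeCat.ofHom (fun u => prod.map f.unop (𝟙 X) ≫ u)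
  map_id Z := by ext u; simp
  map_comp f g := by
    ext u
    show prod.map ((f ≫ g).unop) (𝟙 X) ≫ u
      = prod.map g.unop (𝟙 X) ≫ prod.map f.unop (𝟙 X) ≫ u
    rw [← Category.assoc, prod.map_map]; simp

/-- Contravariant action `S^f : S^Y ⟶ S^X` for `f : X ⟶ Y`. -/
noncomputable def powMap (S : C) {X Y : C} (f : X ⟶ Y) : pow S Y ⟶ pow S X where
  app Z := TypeCat.ofHom (fun u => prod.map (𝟙 _) f ≫ u)
  naturality Z W g := by
    ext u
    change Opposite.unop Z ⨯ Y ⟶ S at u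
    show prod.map (𝟙 _) f ≫ prod.map g.unop (𝟙 Y) ≫ u
      = prod.map g.unop (𝟙 X) ≫ prod.map (𝟙 _) f ≫ u
    rw [← Category.assoc, ← Category.assoc, prod.map_map, prod.map_map]
    simp

@[simp] lemma powMap_id (S X : C) : powMap S (𝟙 X) = 𝟙 (pow S X) := by
  apply NatTrans.ext; funext Z; ext u; simp [powMap, pow]; rfl

@[simp] lemma powMap_comp (S : C) {X Y Z : C} (f : X ⟶ Y) (g : Y ⟶ Z) :
    powMap S (f ≫ g) = powMap S g ≫ powMap S f := by
  apply NatTrans.ext; funext W; ext u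
  change Opposite.unop W ⨯ Z ⟶ S at u
  show prod.map (𝟙 _) (f ≫ g) ≫ u = prod.map (𝟙 _) f ≫ prod.map (𝟙 _) g ≫ u
  rw [← Category.assoc, prod.map_map]; simp

/-- The presheaf `Y ↦ Nat(S^X, S^Y)`, i.e. the double exponential `(yS)^{S^X}`
described by its points. -/
noncomputable def doublePresheaf (S X : C) : Cᵒᵖ ⥤ Type v where
  obj Y := pow S X ⟶ pow S (Opposite.unop Y)
  map h := TypeCat.ofHom (fun δ => δ ≫ powMap S h.unop)
  map_id Y := by ext δ; simp
  map_comp h k := by ext δ; simp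

section LatticeOps

variable {S : C}

/-- Pointwise top element. -/
noncomputable def elTop (top : ⊤_ C ⟶ S) {W : C} : W ⟶ S := terminal.from W ≫ top
/-- Pointwise bottom element. -/
noncomputable def elBot (bot : ⊤_ C ⟶ S) {W : C} : W ⟶ S := terminal.from W ≫ bot
/-- Pointwise binary meet. -/
noncomputable def elMeet (meet : S ⨯ S ⟶ S) {W : C} (u v : W ⟶ S) : W ⟶ S :=
  prod.lift u v ≫ meet
/-- Pointwise binary join. -/
noncomputable def elJoin (join : S ⨯ S ⟶ S) {W : C} (u v : W ⟶ S) : W ⟶ S :=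
  prod.lift u v ≫ join

/-- A natural transformation `S^X ⟶ S^Y` is a distributive lattice homomorphism if it
preserves the (pointwise) finite meets and joins. -/
def IsDLHom (top bot : ⊤_ C ⟶ S) (meet join : S ⨯ S ⟶ S) {X Y : C}
    (α : pow S X ⟶ pow S Y) : Prop :=
  (∀ Z : Cᵒᵖ, α.app Z (elTop top) = elTop top) ∧
  (∀ Z : Cᵒᵖ, α.app Z (elBot bot) = elBot bot) ∧
  (∀ (Z : Cᵒᵖ) (u v : (pow S X).obj Z), α.app Z (elMeet meet u v) = elMeet meet (α.app Z u) (α.app Z v)) ∧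
  (∀ (Z : Cᵒᵖ) (u v : (pow S X).obj Z), α.app Z (elJoin join u v) = elJoin join (α.app Z u) (α.app Z v))

/-- A join semilattice homomorphism `S^X ⟶ S^Y` (preserves `0` and binary joins). -/
def IsJoinHom (bot : ⊤_ C ⟶ S) (join : S ⨯ S ⟶ S) {X Y : C} (α : pow S X ⟶ pow S Y) : Prop :=
  (∀ Z : Cᵒᵖ, α.app Z (elBot bot) = elBot bot) ∧
  (∀ (Z : Cᵒᵖ) (u v : (pow S X).obj Z), α.app Z (elJoin join u v) = elJoin join (α.app Z u) (α.app Z v))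

/-- A meet semilattice homomorphism `S^X ⟶ S^Y` (preserves `1` and binary meets). -/
def IsMeetHom (top : ⊤_ C ⟶ S) (meet : S ⨯ S ⟶ S) {X Y : C} (α : pow S X ⟶ pow S Y) : Prop :=
  (∀ Z : Cᵒᵖ, α.app Z (elTop top) = elTop top) ∧
  (∀ (Z : Cᵒᵖ) (u v : (pow S X).obj Z), α.app Z (elMeet meet u v) = elMeet meet (α.app Z u) (α.app Z v))

/-- Pointwise meet of two natural transformations into `S^X`. -/
noncomputable def meetNat (meet : S ⨯ S ⟶ S) {F : Cᵒᵖ ⥤ Type v} {X : C}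
    (α β : F ⟶ pow S X) : F ⟶ pow S X where
  app Z := TypeCat.ofHom (fun u => elMeet meet (α.app Z u) (β.app Z u))
  naturality Z W g := by
    ext u
    have hα := ConcreteCategory.congr_hom (α.naturality g) u
    have hβ := ConcreteCategory.congr_hom (β.naturality g) u
    simp only [types_comp_apply] at hα hβ
    show elMeet meet (α.app W (F.map g u)) (β.app W (F.map g u))
      = prod.map g.unop (𝟙 X) ≫ elMeet meet (α.app Z u) (β.app Z u)
    rw [hα, hβ]
    show elMeet meet (prod.map g.unop (𝟙 X) ≫ α.app Z u) (prod.map g.unop (𝟙 X) ≫ β.app Z u) = _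
    unfold elMeet
    exact (prod.comp_lift_assoc ..).symm

/-- Pointwise join of two natural transformations into `S^X`. -/
noncomputable def joinNat (join : S ⨯ S ⟶ S) {F : Cᵒᵖ ⥤ Type v} {X : C}
    (α β : F ⟶ pow S X) : F ⟶ pow S X where
  app Z := TypeCat.ofHom (fun u => elJoin join (α.app Z u) (β.app Z u))
  naturality Z W g := by
    ext u
    have hα := ConcreteCategory.congr_hom (α.naturality g) u
    have hβ := ConcreteCategory.congr_hom (β.naturality g) u
    simp only [types_comp_apply] at hα hβ
    show elJoin join (α.app W (F.map g u)) (β.app W (F.map g u))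
      = prod.map g.unop (𝟙 X) ≫ elJoin join (α.app Z u) (β.app Z u)
    rw [hα, hβ]
    show elJoin join (prod.map g.unop (𝟙 X) ≫ α.app Z u) (prod.map g.unop (𝟙 X) ≫ β.app Z u) = _
    unfold elJoin
    exact (prod.comp_lift_assoc ..).symm

end LatticeOps

/-- The natural transformation `S^{(X+X)+Y} ⟶ S^X` given by
`(u,v,w) ↦ u ⊓ (v ⊔ S^f(w))`, used in the statement of Axiom 7. -/
noncomputable def phiNat {S : C} (meet join : S ⨯ S ⟶ S) [HasBinaryCoproducts C]
    {X Y : C} (f : X ⟶ Y) : pow S ((X ⨿ X) ⨿ Y) ⟶ pow S X :=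
  meetNat meet (powMap S ((coprod.inl : X ⟶ X ⨿ X) ≫ coprod.inl))
    (joinNat join (powMap S ((coprod.inr : X ⟶ X ⨿ X) ≫ coprod.inl))
      (powMap S (coprod.inr : Y ⟶ (X ⨿ X) ⨿ Y) ≫ powMap S f))

noncomputable instance powPartialOrder [∀ A B : C, PartialOrder (A ⟶ B)] (S X : C) (Z : Cᵒᵖ) :
    PartialOrder ((pow S X).obj Z) :=
  inferInstanceAs (PartialOrder (Opposite.unop Z ⨯ X ⟶ S))

/-- A *category of spaces*: an order-enriched category with (order-enriched) finite limits
and finite coproducts (Axiom 1), pullback-stable coproducts (Axiom 2), a Sierpiński object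
`S` (Axiom 3) which is double exponentiable (Axiom 4), such that distributive lattice
homomorphisms between double exponentials are represented by morphisms (Axiom 5),
(de/in)flationary idempotents split in the (upper/lower) power Kleisli categories (Axiom 6),
and `S^(-)` sends equalizers to coequalizers of the appropriate pairs (Axiom 7). -/
class CategoryOfSpaces (C : Type v) [Category.{v} C] [∀ X Y : C, PartialOrder (X ⟶ Y)]
    [HasFiniteLimits C] [HasFiniteCoproducts C] : Type v where
  /-- composition is monotone (order enrichment) -/
  comp_le : ∀ {X Y Z : C} {f f' : X ⟶ Y} {g g' : Y ⟶ Z}, f ≤ f' → g ≤ g' → f ≫ g ≤ f' ≫ g'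
  /-- the universal property of products is order-enriched -/
  lift_le : ∀ {X Y Z : C} {f f' : X ⟶ Y} {g g' : X ⟶ Z}, f ≤ f' → g ≤ g' →
    prod.lift f g ≤ prod.lift f' g'
  /-- Axiom 2: pullback preserves finite coproducts -/
  pullback_preserves_coproducts : ∀ {X Y : C} (f : X ⟶ Y),
    Nonempty (PreservesFiniteCoproducts (Over.pullback f))
  /-- Axiom 3: the Sierpiński object -/
  S : C
  top : ⊤_ C ⟶ S
  bot : ⊤_ C ⟶ S
  meet : S ⨯ S ⟶ S
  join : S ⨯ S ⟶ S
  /-- `1 : 1 ⟶ S` is right adjoint to `! : S ⟶ 1` -/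
  top_adj : 𝟙 S ≤ terminal.from S ≫ top
  /-- `0 : 1 ⟶ S` is left adjoint to `! : S ⟶ 1` -/
  bot_adj : terminal.from S ≫ bot ≤ 𝟙 S
  /-- `⊓` is right adjoint to the diagonal -/
  meet_unit : 𝟙 S ≤ prod.lift (𝟙 S) (𝟙 S) ≫ meet
  meet_counit : meet ≫ prod.lift (𝟙 S) (𝟙 S) ≤ 𝟙 (S ⨯ S)
  /-- `⊔` is left adjoint to the diagonal -/
  join_unit : 𝟙 (S ⨯ S) ≤ join ≫ prod.lift (𝟙 S) (𝟙 S)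
  join_counit : prod.lift (𝟙 S) (𝟙 S) ≫ join ≤ 𝟙 S
  /-- `S` is a distributive lattice -/
  distrib : prod.map (𝟙 S) join ≫ meet
    = prod.lift (prod.map (𝟙 S) prod.fst ≫ meet) (prod.map (𝟙 S) prod.snd ≫ meet) ≫ join
  /-- a morphism into `S` is determined by the pullback of `1` -/
  sierp_top : ∀ {X : C} (a b : X ⟶ S),
    (∀ {T : C} (x : T ⟶ X), x ≫ a = terminal.from T ≫ top ↔ x ≫ b = terminal.from T ≫ top) →
    a = b
  /-- a morphism into `S` is determined by the pullback of `0` -/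
  sierp_bot : ∀ {X : C} (a b : X ⟶ S),
    (∀ {T : C} (x : T ⟶ X), x ≫ a = terminal.from T ≫ bot ↔ x ≫ b = terminal.from T ≫ bot) →
    a = b
  /-- Axiom 4: `S` is double exponentiable -/
  double_exp : ∀ X : C, ∃ P : C, Nonempty (doublePresheaf S X ≅ yoneda.obj P)
  /-- Axiom 5 -/
  ax5 : ∀ {X Y : C} (α : pow S X ⟶ pow S Y), IsDLHom top bot meet join α →
    ∃! f : Y ⟶ X, α = powMap S f
  /-- Axiom 6 (i): inflationary idempotents split in the lower power Kleisli category -/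
  ax6L : ∀ {X : C} (α : pow S X ⟶ pow S X), IsJoinHom bot join α →
    (∀ (Z : Cᵒᵖ) (u : Opposite.unop Z ⨯ X ⟶ S), u ≤ (α.app Z u : Opposite.unop Z ⨯ X ⟶ S)) →
    α ≫ α = α →
    ∃ (X₀ : C) (θ : pow S X₀ ⟶ pow S X) (γ : pow S X ⟶ pow S X₀),
      IsJoinHom bot join θ ∧ IsJoinHom bot join γ ∧ γ ≫ θ = α ∧ θ ≫ γ = 𝟙 (pow S X₀)
  /-- Axiom 6 (ii): deflationary idempotents split in the upper power Kleisli category -/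
  ax6U : ∀ {X : C} (α : pow S X ⟶ pow S X), IsMeetHom top meet α →
    (∀ (Z : Cᵒᵖ) (u : Opposite.unop Z ⨯ X ⟶ S), (α.app Z u : Opposite.unop Z ⨯ X ⟶ S) ≤ u) →
    α ≫ α = α →
    ∃ (X₀ : C) (θ : pow S X₀ ⟶ pow S X) (γ : pow S X ⟶ pow S X₀),
      IsMeetHom top meet θ ∧ IsMeetHom top meet γ ∧ γ ≫ θ = α ∧ θ ≫ γ = 𝟙 (pow S X₀)
  /-- Axiom 7 -/
  ax7 : ∀ {E X Y : C} (e : E ⟶ X) (f g : X ⟶ Y) (w : e ≫ f = e ≫ g),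
    Nonempty (IsLimit (Fork.ofι e w)) →
    phiNat meet join f ≫ powMap S e = phiNat meet join g ≫ powMap S e ∧
    ∀ {W : C} (κ : pow S X ⟶ pow S W), phiNat meet join f ≫ κ = phiNat meet join g ≫ κ →
      ∃! κ' : pow S E ⟶ pow S W, κ = powMap S e ≫ κ'

variable {C : Type v} [Category.{v} C] [∀ X Y : C, PartialOrder (X ⟶ Y)]
  [HasFiniteLimits C] [HasFiniteCoproducts C] [SC : CategoryOfSpaces C]

/-- The Sierpiński object of a category of spaces. -/
noncomputable def Sierp (C : Type v) [Category.{v} C] [∀ X Y : C, PartialOrder (X ⟶ Y)]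
    [HasFiniteLimits C] [HasFiniteCoproducts C] [SC : CategoryOfSpaces C] : C := SC.S

/-- `E` witnesses that `f` is an open map: `E ⊣ S^f` and the Frobenius condition holds. -/
def IsOpenVia {X Y : C} (f : X ⟶ Y) (E : pow (Sierp C) X ⟶ pow (Sierp C) Y) : Prop :=
  (∀ (Z : Cᵒᵖ) (u : Opposite.unop Z ⨯ X ⟶ Sierp C) (v : Opposite.unop Z ⨯ Y ⟶ Sierp C),
      (E.app Z u : Opposite.unop Z ⨯ Y ⟶ Sierp C) ≤ v ↔
        u ≤ ((powMap (Sierp C) f).app Z v : Opposite.unop Z ⨯ X ⟶ Sierp C)) ∧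
  (∀ (Z : Cᵒᵖ) (u : Opposite.unop Z ⨯ X ⟶ Sierp C) (v : Opposite.unop Z ⨯ Y ⟶ Sierp C),
      E.app Z (elMeet SC.meet u ((powMap (Sierp C) f).app Z v))
        = elMeet SC.meet (E.app Z u) v)

/-- A morphism is open if some `∃_f` witnesses it. -/
def IsOpenMor {X Y : C} (f : X ⟶ Y) : Prop := ∃ E, IsOpenVia f E

/-- An object is open if the unique map to the terminal object is open. -/
def IsOpenOb (X : C) : Prop := IsOpenMor (terminal.from X)

/-- `p#` is a triquotient assignment on `p`. -/
def IsTriqAssign {Z Y : C} (p : Z ⟶ Y) (ph : pow (Sierp C) Z ⟶ pow (Sierp C) Y) : Prop :=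
  (∀ (W : Cᵒᵖ) (u : Opposite.unop W ⨯ Z ⟶ Sierp C) (v : Opposite.unop W ⨯ Y ⟶ Sierp C),
      elMeet SC.meet (ph.app W u) v
        ≤ (ph.app W (elMeet SC.meet u ((powMap (Sierp C) p).app W v))
            : Opposite.unop W ⨯ Y ⟶ Sierp C)) ∧
  (∀ (W : Cᵒᵖ) (u : Opposite.unop W ⨯ Z ⟶ Sierp C) (v : Opposite.unop W ⨯ Y ⟶ Sierp C),
      (ph.app W (elJoin SC.join u ((powMap (Sierp C) p).app W v))
          : Opposite.unop W ⨯ Y ⟶ Sierp C) ≤ elJoin SC.join (ph.app W u) v)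

/-- `p` is a triquotient surjection. -/
def IsTriqSurj {Z Y : C} (p : Z ⟶ Y) : Prop :=
  ∃ ph, IsTriqAssign p ph ∧ powMap (Sierp C) p ≫ ph = 𝟙 (pow (Sierp C) Y)

/-- An internal monoid in a category with finite products. -/
structure MonoidObject (C : Type v) [Category.{v} C] [HasFiniteProducts C] where
  M : C
  m : M ⨯ M ⟶ M
  e : ⊤_ C ⟶ M
  mul_assoc : prod.map m (𝟙 M) ≫ m = (prod.associator M M M).hom ≫ prod.map (𝟙 M) m ≫ m
  one_mul : prod.lift (terminal.from M ≫ e) (𝟙 M) ≫ m = 𝟙 M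
  mul_one : prod.lift (𝟙 M) (terminal.from M ≫ e) ≫ m = 𝟙 M

/-- An `M`-object for an internal monoid `M`. -/
structure MObject (Mo : MonoidObject C) where
  X : C
  act : Mo.M ⨯ X ⟶ X
  act_one : prod.lift (terminal.from X ≫ Mo.e) (𝟙 X) ≫ act = 𝟙 X
  act_mul : prod.map (𝟙 Mo.M) act ≫ act
    = (prod.associator Mo.M Mo.M X).inv ≫ prod.map Mo.m (𝟙 X) ≫ act


attribute [local simp] prod.lift_fst prod.lift_snd prod.lift_fst_assoc prod.lift_snd_assoc

set_option linter.unusedSectionVars false in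
lemma cos_comp_le_left {X Y Z : C} (h : X ⟶ Y) {f g : Y ⟶ Z} (hfg : f ≤ g) :
    h ≫ f ≤ h ≫ g :=
  SC.comp_le (le_refl h) hfg

set_option linter.unusedSectionVars false in
lemma act_one_el {Mo : MonoidObject C} (Xa : MObject Mo) {T : C} (x : T ⟶ Xa.X) :
    prod.lift (terminal.from T ≫ Mo.e) x ≫ Xa.act = x := by
  have h : prod.lift (terminal.from T ≫ Mo.e) x
      = x ≫ prod.lift (terminal.from Xa.X ≫ Mo.e) (𝟙 Xa.X) := by
    rw [prod.comp_lift]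
    congr 1
    · rw [← Category.assoc]
      congr 1
      apply Subsingleton.elim
    · simp
  rw [h, Category.assoc, Xa.act_one, Category.comp_id]

set_option linter.unusedSectionVars false in
lemma act_mul_el {Mo : MonoidObject C} (Xa : MObject Mo) {T : C}
    (m₁ m₂ : T ⟶ Mo.M) (x : T ⟶ Xa.X) :
    prod.lift m₁ (prod.lift m₂ x ≫ Xa.act) ≫ Xa.act
      = prod.lift (prod.lift m₁ m₂ ≫ Mo.m) x ≫ Xa.act := by
  have h := congrArg (fun k => prod.lift m₁ (prod.lift m₂ x) ≫ k) Xa.act_mul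
  simp only [prod.comp_lift_assoc, prod.lift_map_assoc, Category.comp_id,
    prod.lift_fst_assoc, prod.lift_snd_assoc, prod.associator_inv,
    prod.lift_fst, prod.lift_snd, prod.comp_lift, Category.assoc,
    prod.lift_map] at h
  convert h using 2

section QopSection

variable {M₀ : C} (EM : pow (Sierp C) M₀ ⟶ pow (Sierp C) (⊤_ C))

/-- The "exists" operator on generalized elements derived from an open-object witness. -/
noncomputable def Qop (V : C) (w : V ⨯ M₀ ⟶ Sierp C) : V ⟶ Sierp C :=
  prod.lift (𝟙 V) (terminal.from V) ≫ EM.app (Opposite.op V) w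

set_option linter.unusedSectionVars false in
lemma Qop_adj (hEM : IsOpenVia (terminal.from M₀) EM) (V : C)
    (w : V ⨯ M₀ ⟶ Sierp C) (s : V ⟶ Sierp C) :
    Qop EM V w ≤ s ↔ w ≤ prod.fst ≫ s := by
  have hadj := hEM.1 (Opposite.op V) w (prod.fst ≫ s)
  have hv : (powMap (Sierp C) (terminal.from M₀)).app (Opposite.op V) (prod.fst ≫ s)
      = prod.fst ≫ s := by
    show prod.map (𝟙 V) (terminal.from M₀) ≫ prod.fst ≫ s = prod.fst ≫ s
    rw [← Category.assoc, prod.map_fst, Category.assoc]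
    simp
  rw [hv] at hadj
  rw [← hadj]
  constructor
  · intro h
    have h2 : prod.fst ≫ prod.lift (𝟙 V) (terminal.from V) = 𝟙 (V ⨯ ⊤_ C) := by
      apply Limits.prod.hom_ext
      · simp
      · apply Subsingleton.elim
    calc (id (EM.app (Opposite.op V) w) : V ⨯ ⊤_ C ⟶ Sierp C)
        = prod.fst ≫ Qop EM V w := by
          unfold Qop; erw [← Category.assoc, h2, Category.id_comp]; rfl
      _ ≤ prod.fst ≫ s := cos_comp_le_left _ h
  · intro h
    calc Qop EM V w ≤ prod.lift (𝟙 V) (terminal.from V) ≫ prod.fst ≫ s :=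
          cos_comp_le_left _ h
      _ = s := by rw [← Category.assoc, prod.lift_fst, Category.id_comp]

set_option linter.unusedSectionVars false in
lemma Qop_nat {V V' : C} (g : V' ⟶ V) (w : V ⨯ M₀ ⟶ Sierp C) :
    Qop EM V' (prod.map g (𝟙 M₀) ≫ w) = g ≫ Qop EM V w := by
  have hnat := ConcreteCategory.congr_hom (EM.naturality g.op) w
  have hnat' : EM.app (Opposite.op V') (prod.map g (𝟙 M₀) ≫ w)
      = prod.map g (𝟙 (⊤_ C)) ≫ EM.app (Opposite.op V) w := hnat
  unfold Qop
  erw [hnat', ← Category.assoc, ← Category.assoc]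
  congr 1
  apply Limits.prod.hom_ext
  · simp
  · apply Subsingleton.elim

end QopSection

/-- The evident iso `(W ⨯ X) ⨯ M ⟶ W ⨯ (M ⨯ X)`. -/
noncomputable def betaMap (W M X : C) : (W ⨯ X) ⨯ M ⟶ W ⨯ (M ⨯ X) :=
  prod.lift (prod.fst ≫ prod.fst) (prod.lift prod.snd (prod.fst ≫ prod.snd))

/-- The inverse of `betaMap`. -/
noncomputable def betaInvMap (W M X : C) : W ⨯ (M ⨯ X) ⟶ (W ⨯ X) ⨯ M :=
  prod.lift (prod.lift prod.fst (prod.snd ≫ prod.snd)) (prod.snd ≫ prod.fst)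

/-- The "act on the second coordinate" map `((w,x),m) ↦ (w, m·x)`. -/
noncomputable def gammaMap {Mo : MonoidObject C} (Xa : MObject Mo) (W : C) :
    (W ⨯ Xa.X) ⨯ Mo.M ⟶ W ⨯ Xa.X :=
  prod.lift (prod.fst ≫ prod.fst) (prod.lift prod.snd (prod.fst ≫ prod.snd) ≫ Xa.act)

/-- The "multiply the two monoid coordinates" map `(((v,m),m') ↦ ((v,m), m'·m)`. -/
noncomputable def cMap (Mo : MonoidObject C) (V : C) :
    (V ⨯ Mo.M) ⨯ Mo.M ⟶ (V ⨯ Mo.M) ⨯ Mo.M :=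
  prod.lift prod.fst (prod.lift prod.snd (prod.fst ≫ prod.snd) ≫ Mo.m)

set_option linter.unusedSectionVars false in
lemma betaMap_fst (W M X : C) :
    betaMap W M X ≫ prod.map (𝟙 W) (prod.snd : M ⨯ X ⟶ X) = prod.fst := by
  unfold betaMap
  apply Limits.prod.hom_ext <;> simp

set_option linter.unusedSectionVars false in
lemma betaInv_beta (W M X : C) :
    betaInvMap W M X ≫ betaMap W M X = 𝟙 (W ⨯ (M ⨯ X)) := by
  unfold betaMap betaInvMap
  apply Limits.prod.hom_ext
  · simp
  · apply Limits.prod.hom_ext <;> simp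

set_option linter.unusedSectionVars false in
lemma beta_gamma {Mo : MonoidObject C} (Xa : MObject Mo) (W : C) :
    betaMap W Mo.M Xa.X ≫ prod.map (𝟙 W) Xa.act = gammaMap Xa W := by
  unfold betaMap gammaMap
  apply Limits.prod.hom_ext <;> simp

set_option linter.unusedSectionVars false in
lemma gamma_sec {Mo : MonoidObject C} (Xa : MObject Mo) (W : C) :
    prod.lift (𝟙 (W ⨯ Xa.X)) (terminal.from (W ⨯ Xa.X) ≫ Mo.e) ≫ gammaMap Xa W
      = 𝟙 (W ⨯ Xa.X) := by
  unfold gammaMap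
  apply Limits.prod.hom_ext
  · simp
  · simp only [prod.comp_lift_assoc, Category.id_comp, Category.comp_id,
      prod.lift_fst, prod.lift_snd, prod.lift_fst_assoc, prod.lift_snd_assoc,
      Category.assoc]
    rw [act_one_el Xa]

set_option linter.unusedSectionVars false in
lemma cMap_fst {Mo : MonoidObject C} (V : C) :
    cMap Mo V ≫ prod.fst = prod.fst := by
  unfold cMap; simp

set_option linter.unusedSectionVars false in
lemma cMap_gamma {Mo : MonoidObject C} (Xa : MObject Mo) (W : C) :
    cMap Mo (W ⨯ Xa.X) ≫ prod.map (prod.fst : (W ⨯ Xa.X) ⨯ Mo.M ⟶ W ⨯ Xa.X) (𝟙 Mo.M)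
        ≫ gammaMap Xa W
      = prod.map (gammaMap Xa W) (𝟙 Mo.M) ≫ gammaMap Xa W := by
  unfold cMap gammaMap
  apply Limits.prod.hom_ext
  · simp
  · simp only [Category.assoc, prod.lift_snd, prod.comp_lift_assoc,
      prod.lift_map_assoc, Category.comp_id, Category.id_comp,
      prod.lift_fst, prod.lift_fst_assoc, prod.lift_snd_assoc, prod.comp_lift,
      prod.lift_map, prod.map_fst, prod.map_snd, prod.map_fst_assoc,
      prod.map_snd_assoc]
    rw [← act_mul_el Xa]

/-- For an open monoid `M` and an `M`-object `(X, a)`, the composite `∃_{π₂} ∘ S^a` is an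
inflationary idempotent on `S^X`. -/
theorem open_monoid_inflationary_idempotent (Mo : MonoidObject C) (hM : IsOpenOb Mo.M)
    (Xa : MObject Mo) (E : pow (Sierp C) (Mo.M ⨯ Xa.X) ⟶ pow (Sierp C) Xa.X)
    (hE : IsOpenVia (prod.snd : Mo.M ⨯ Xa.X ⟶ Xa.X) E) :
    (∀ (W : Cᵒᵖ) (u : Opposite.unop W ⨯ Xa.X ⟶ Sierp C),
        u ≤ E.app W ((powMap (Sierp C) Xa.act).app W u)) ∧
    (powMap (Sierp C) Xa.act ≫ E) ≫ (powMap (Sierp C) Xa.act ≫ E)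
      = powMap (Sierp C) Xa.act ≫ E := by
  obtain ⟨EM, hEM⟩ := hM
  -- Key lemma: E is computed by Qop
  have key : ∀ (Z : Cᵒᵖ) (u : Opposite.unop Z ⨯ (Mo.M ⨯ Xa.X) ⟶ Sierp C),
      E.app Z u
        = Qop EM (Opposite.unop Z ⨯ Xa.X) (betaMap (Opposite.unop Z) Mo.M Xa.X ≫ u) := by
    intro Z u
    have h1 : ∀ v : Opposite.unop Z ⨯ Xa.X ⟶ Sierp C,
        E.app Z u ≤ v ↔ u ≤ prod.map (𝟙 (Opposite.unop Z)) prod.snd ≫ v :=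
      fun v => hE.1 Z u v
    apply le_antisymm
    · rw [h1]
      have hu : betaMap (Opposite.unop Z) Mo.M Xa.X ≫ u
          ≤ prod.fst ≫ Qop EM (Opposite.unop Z ⨯ Xa.X)
              (betaMap (Opposite.unop Z) Mo.M Xa.X ≫ u) :=
        (Qop_adj EM hEM _ _ _).mp (le_refl _)
      have h2 := cos_comp_le_left (betaInvMap (Opposite.unop Z) Mo.M Xa.X) hu
      rw [← Category.assoc, betaInv_beta, Category.id_comp] at h2
      refine le_trans h2 (le_of_eq ?_)
      rw [← Category.assoc]
      congr 1
      rw [← betaMap_fst (Opposite.unop Z) Mo.M Xa.X, ← Category.assoc,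
        betaInv_beta, Category.id_comp]
    · erw [Qop_adj EM hEM]
      have hunit : u ≤ prod.map (𝟙 (Opposite.unop Z)) prod.snd ≫ E.app Z u :=
        (h1 _).mp (le_refl _)
      refine le_trans (cos_comp_le_left (betaMap (Opposite.unop Z) Mo.M Xa.X) hunit)
        (le_of_eq ?_)
      erw [← Category.assoc, betaMap_fst]
  -- Part 1
  have part1 : ∀ (Z : Cᵒᵖ) (u : Opposite.unop Z ⨯ Xa.X ⟶ Sierp C),
      u ≤ E.app Z ((powMap (Sierp C) Xa.act).app Z u) := by
    intro Z u
    have hkey : E.app Z ((powMap (Sierp C) Xa.act).app Z u)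
        = Qop EM (Opposite.unop Z ⨯ Xa.X) (gammaMap Xa (Opposite.unop Z) ≫ u) := by
      erw [key Z]
      congr 1
      show betaMap (Opposite.unop Z) Mo.M Xa.X
          ≫ prod.map (𝟙 (Opposite.unop Z)) Xa.act ≫ u = _
      rw [← Category.assoc, beta_gamma]
    rw [hkey]
    have hunit : gammaMap Xa (Opposite.unop Z) ≫ u
        ≤ prod.fst ≫ Qop EM (Opposite.unop Z ⨯ Xa.X)
            (gammaMap Xa (Opposite.unop Z) ≫ u) :=
      (Qop_adj EM hEM _ _ _).mp (le_refl _)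
    have hs := cos_comp_le_left
      (prod.lift (𝟙 (Opposite.unop Z ⨯ Xa.X)) (terminal.from _ ≫ Mo.e)) hunit
    rw [← Category.assoc, gamma_sec, Category.id_comp, ← Category.assoc,
      prod.lift_fst, Category.id_comp] at hs
    exact hs
  refine ⟨part1, ?_⟩
  -- Part 2 : idempotency
  apply NatTrans.ext
  funext Z
  ext (u : Opposite.unop Z ⨯ Xa.X ⟶ Sierp C)
  simp only [NatTrans.comp_app, types_comp_apply]
  show E.app Z ((powMap (Sierp C) Xa.act).app Z (E.app Z ((powMap (Sierp C) Xa.act).app Z u)))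
    = E.app Z ((powMap (Sierp C) Xa.act).app Z u)
  -- abbreviations
  have hγu : E.app Z ((powMap (Sierp C) Xa.act).app Z u)
      = Qop EM (Opposite.unop Z ⨯ Xa.X) (gammaMap Xa (Opposite.unop Z) ≫ u) := by
    erw [key Z]
    congr 1
    show betaMap (Opposite.unop Z) Mo.M Xa.X
        ≫ prod.map (𝟙 (Opposite.unop Z)) Xa.act ≫ u = _
    rw [← Category.assoc, beta_gamma]
  have hγQ : E.app Z ((powMap (Sierp C) Xa.act).app Z
        (Qop EM (Opposite.unop Z ⨯ Xa.X) (gammaMap Xa (Opposite.unop Z) ≫ u)))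
      = Qop EM (Opposite.unop Z ⨯ Xa.X) (gammaMap Xa (Opposite.unop Z)
          ≫ Qop EM (Opposite.unop Z ⨯ Xa.X) (gammaMap Xa (Opposite.unop Z) ≫ u)) := by
    erw [key Z]
    congr 1
    show betaMap (Opposite.unop Z) Mo.M Xa.X
        ≫ prod.map (𝟙 (Opposite.unop Z)) Xa.act ≫ _ = _
    rw [← Category.assoc, beta_gamma]
  erw [hγu, hγQ]
  set w₀ : (Opposite.unop Z ⨯ Xa.X) ⨯ Mo.M ⟶ Sierp C
    := gammaMap Xa (Opposite.unop Z) ≫ u with hw₀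
  apply le_antisymm
  · erw [Qop_adj EM hEM]
    rw [show gammaMap Xa (Opposite.unop Z) ≫ Qop EM (Opposite.unop Z ⨯ Xa.X) w₀
        = Qop EM ((Opposite.unop Z ⨯ Xa.X) ⨯ Mo.M)
            (prod.map (gammaMap Xa (Opposite.unop Z)) (𝟙 Mo.M) ≫ w₀)
      from (Qop_nat EM _ _).symm]
    rw [show (prod.fst : (Opposite.unop Z ⨯ Xa.X) ⨯ Mo.M ⟶ _)
          ≫ Qop EM (Opposite.unop Z ⨯ Xa.X) w₀
        = Qop EM ((Opposite.unop Z ⨯ Xa.X) ⨯ Mo.M)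
            (prod.map (prod.fst : (Opposite.unop Z ⨯ Xa.X) ⨯ Mo.M ⟶ _) (𝟙 Mo.M) ≫ w₀)
      from (Qop_nat EM _ _).symm]
    rw [Qop_adj EM hEM]
    have hunit2 : prod.map (prod.fst : (Opposite.unop Z ⨯ Xa.X) ⨯ Mo.M ⟶ _) (𝟙 Mo.M) ≫ w₀
        ≤ prod.fst ≫ Qop EM ((Opposite.unop Z ⨯ Xa.X) ⨯ Mo.M)
            (prod.map (prod.fst : (Opposite.unop Z ⨯ Xa.X) ⨯ Mo.M ⟶ _) (𝟙 Mo.M) ≫ w₀) :=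
      (Qop_adj EM hEM _ _ _).mp (le_refl _)
    have h3 := cos_comp_le_left (cMap Mo (Opposite.unop Z ⨯ Xa.X)) hunit2
    have h4 : cMap Mo (Opposite.unop Z ⨯ Xa.X)
          ≫ prod.map (prod.fst : (Opposite.unop Z ⨯ Xa.X) ⨯ Mo.M ⟶ _) (𝟙 Mo.M) ≫ w₀
        = prod.map (gammaMap Xa (Opposite.unop Z)) (𝟙 Mo.M) ≫ w₀ := by
      rw [hw₀]
      calc cMap Mo (Opposite.unop Z ⨯ Xa.X)
            ≫ prod.map prod.fst (𝟙 Mo.M) ≫ gammaMap Xa (Opposite.unop Z) ≫ u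
          = (cMap Mo (Opposite.unop Z ⨯ Xa.X)
              ≫ prod.map prod.fst (𝟙 Mo.M) ≫ gammaMap Xa (Opposite.unop Z)) ≫ u := by
            simp only [Category.assoc]
        _ = (prod.map (gammaMap Xa (Opposite.unop Z)) (𝟙 Mo.M)
              ≫ gammaMap Xa (Opposite.unop Z)) ≫ u := by rw [cMap_gamma]
        _ = prod.map (gammaMap Xa (Opposite.unop Z)) (𝟙 Mo.M)
              ≫ gammaMap Xa (Opposite.unop Z) ≫ u := by simp only [Category.assoc]
    refine le_trans (le_of_eq h4.symm) (le_trans h3 (le_of_eq ?_))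
    rw [← Category.assoc, cMap_fst]
  · have h := part1 Z (Qop EM (Opposite.unop Z ⨯ Xa.X) w₀)
    rw [hγQ] at h
    exact h
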